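/- For positive reals r and ϑ with r > ϑ > 0, we have ϑ + (√r - √ϑ)² > (r + ϑ)²/(4r). -/
import Mathlib

/-- ϑ + (√r - √ϑ)² > (r+ϑ)²/(4r) for r > ϑ > 0. -/
theorem stmt_1 (r ϑ : ℝ) (hrϑ : r > ϑ) (hϑ : ϑ > 0) :
    ϑ + (Real.sqrt r - Real.sqrt ϑ)^2 > (r + ϑ)^2 / (4*r) := by
  have hr : r > 0 := lt_trans hϑ hrϑ
  have hs : Real.sqrt r ^ 2 = r := Real.sq_sqrt hr.le
  have ht : Real.sqrt ϑ ^ 2 = ϑ := Real.sq_sqrt hϑ.le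
  have hst : Real.sqrt ϑ < Real.sqrt r := Real.sqrt_lt_sqrt hϑ.le hrϑ
  have htpos : 0 < Real.sqrt ϑ := Real.sqrt_pos.mpr hϑ
  rw [gt_iff_lt, div_lt_iff₀ (by linarith)]
  nlinarith [sq_nonneg (Real.sqrt r - Real.sqrt ϑ), mul_pos (mul_pos (sub_pos.mpr hst) (sub_pos.mpr hst)) (sub_pos.mpr hst), sq_nonneg (Real.sqrt r + Real.sqrt ϑ)]
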